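/- Let W₁,…,W_n be independent real random variables satisfying max_{i=1,…,n} K² · E{e^{W_i²/K²} − 1} ≤ σ₀² for some K, σ₀ > 0. Then P{ (1/n) ∑_{i=1}^n W_i² > 2σ₀² } ≤ exp( − n · σ₀² / K² ). -/

import Mathlib

open MeasureTheory ProbabilityTheory Real Finset

/-! Chernoff's bound for `∑ Wᵢ²` at the parameter `t = 1/K²`: the hypothesis says precisely that
the moment generating function of `Wᵢ²` at `1/K²` is at most `1 + σ₀²/K² ≤ exp (σ₀²/K²)`, so by
independence the one of the sum is at most `exp (n σ₀²/K²)`, and the level `2nσ₀²` costs a factor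
`exp (-2nσ₀²/K²)`. -/

section Chernoff

variable {Ω ι : Type*} {m : MeasurableSpace Ω} {μ : Measure Ω}

lemma mgf_sq_inv_sq_le_exp {W : Ω → ℝ} {K s : ℝ} (hK : K ≠ 0)
    (h : K ^ 2 * (∫ ω, exp (W ω ^ 2 / K ^ 2) ∂μ - 1) ≤ s) :
    mgf (fun ω ↦ W ω ^ 2) μ (K ^ 2)⁻¹ ≤ exp (s / K ^ 2) := by
  have hK2 : 0 < K ^ 2 := by positivity
  have hmgf : mgf (fun ω ↦ W ω ^ 2) μ (K ^ 2)⁻¹ = ∫ ω, exp (W ω ^ 2 / K ^ 2) ∂μ := by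
    simp only [mgf, inv_mul_eq_div]
  calc mgf (fun ω ↦ W ω ^ 2) μ (K ^ 2)⁻¹ ≤ s / K ^ 2 + 1 := by
        rw [hmgf, ← sub_le_iff_le_add, le_div_iff₀ hK2, mul_comm]
        exact h
    _ ≤ exp (s / K ^ 2) := add_one_le_exp _

lemma measureReal_sum_ge_le_of_iIndepFun_of_mgf_le {X : ι → Ω → ℝ} (h_indep : iIndepFun X μ)
    (h_meas : ∀ i, Measurable (X i)) {s : Finset ι} {t c : ℝ} (ht : 0 ≤ t)
    (h_int : ∀ i ∈ s, Integrable (fun ω ↦ exp (t * X i ω)) μ)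
    (h_mgf : ∀ i ∈ s, mgf (X i) μ t ≤ exp c) (ε : ℝ) :
    μ.real {ω | ε ≤ ∑ i ∈ s, X i ω} ≤ exp (-t * ε + #s * c) := by
  have := h_indep.isProbabilityMeasure
  have h_mgf_sum : mgf (∑ i ∈ s, X i) μ t ≤ exp (#s * c) :=
    calc mgf (∑ i ∈ s, X i) μ t = ∏ i ∈ s, mgf (X i) μ t := h_indep.mgf_sum h_meas s
      _ ≤ ∏ _i ∈ s, exp c := prod_le_prod (fun _ _ ↦ mgf_nonneg) h_mgf
      _ = exp (#s * c) := by rw [prod_const, exp_nat_mul]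
  calc μ.real {ω | ε ≤ ∑ i ∈ s, X i ω}
      ≤ exp (-t * ε) * mgf (∑ i ∈ s, X i) μ t := by
        simpa only [Finset.sum_apply] using
          measure_ge_le_exp_mul_mgf ε ht (h_indep.integrable_exp_mul_sum h_meas h_int)
    _ ≤ exp (-t * ε) * exp (#s * c) := by gcongr
    _ = exp (-t * ε + #s * c) := (exp_add _ _).symm

end Chernoff

theorem sum_sq_subgaussian_tail_bound_general
    {Ω : Type*} [MeasureSpace Ω]
    {n : ℕ} (W : Fin n → Ω → ℝ)
    (hWmeas : ∀ i, Measurable (W i))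
    (hWindep : iIndepFun W ℙ)
    (K σ₀ : ℝ) (hK : 0 < K)
    (hint : ∀ i, Integrable (fun ω => Real.exp ((W i ω) ^ 2 / K ^ 2)) ℙ)
    (hsub : ∀ i, K ^ 2 * ((∫ ω, Real.exp ((W i ω) ^ 2 / K ^ 2)) - 1) ≤ σ₀ ^ 2) :
    (ℙ {ω | 2 * σ₀ ^ 2 < (∑ i, (W i ω) ^ 2) / n}).toReal ≤
      Real.exp (-(n * σ₀ ^ 2) / K ^ 2) := by
  have := hWindep.isProbabilityMeasure
  have h_event : {ω | 2 * σ₀ ^ 2 < (∑ i, W i ω ^ 2) / n} ⊆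
      {ω | 2 * n * σ₀ ^ 2 ≤ ∑ i, W i ω ^ 2} := by
    intro ω hω
    rcases n.eq_zero_or_pos with rfl | hn
    · simp only [Set.mem_ofPred_eq, CharP.cast_eq_zero, div_zero] at hω
      nlinarith
    · rw [Set.mem_ofPred_eq, lt_div_iff₀ (by positivity)] at hω
      show 2 * n * σ₀ ^ 2 ≤ _
      linarith
  have h_sq_indep : iIndepFun (fun i ω ↦ W i ω ^ 2) ℙ :=
    hWindep.comp (fun _ x ↦ x ^ 2) fun _ ↦ measurable_id.pow_const 2
  have h_tail := measureReal_sum_ge_le_of_iIndepFun_of_mgf_le h_sq_indep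
    (fun i ↦ (hWmeas i).pow_const 2) (s := univ) (inv_nonneg.2 (sq_nonneg K))
    (fun i _ ↦ by simpa only [inv_mul_eq_div] using hint i)
    (fun i _ ↦ mgf_sq_inv_sq_le_exp hK.ne' (hsub i)) (2 * n * σ₀ ^ 2)
  calc (ℙ {ω | 2 * σ₀ ^ 2 < (∑ i, W i ω ^ 2) / n}).toReal
      ≤ (ℙ : Measure Ω).real {ω | 2 * n * σ₀ ^ 2 ≤ ∑ i, W i ω ^ 2} :=
        measureReal_mono (μ := ℙ) h_event
    _ ≤ exp (-(K ^ 2)⁻¹ * (2 * n * σ₀ ^ 2) + #(univ : Finset (Fin n)) * (σ₀ ^ 2 / K ^ 2)) :=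
        h_tail
    _ = exp (-(n * σ₀ ^ 2) / K ^ 2) := by
        rw [card_univ, Fintype.card_fin]
        ring_nf

/-- Let `W₁, …, W_n` be independent real random variables satisfying the sub-Gaussian condition
`max_i K² E{exp(W_i²/K²) − 1} ≤ σ₀²` for some `K, σ₀ > 0`.  Then
`P{(1/n) ∑ᵢ W_i² > 2σ₀²} ≤ exp(−n σ₀² / K²)`. -/
theorem sum_sq_subgaussian_tail_bound
    {Ω : Type*} [MeasureSpace Ω] [IsProbabilityMeasure (ℙ : Measure Ω)]
    {n : ℕ} (hn : 0 < n) (W : Fin n → Ω → ℝ)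
    (hWmeas : ∀ i, Measurable (W i))
    (hWindep : iIndepFun W ℙ)
    (K σ₀ : ℝ) (hK : 0 < K) (hσ₀ : 0 < σ₀)
    (hint : ∀ i, Integrable (fun ω => Real.exp ((W i ω) ^ 2 / K ^ 2)) ℙ)
    (hsub : ∀ i, K ^ 2 * ((∫ ω, Real.exp ((W i ω) ^ 2 / K ^ 2)) - 1) ≤ σ₀ ^ 2) :
    (ℙ {ω | 2 * σ₀ ^ 2 < (∑ i, (W i ω) ^ 2) / n}).toReal ≤
      Real.exp (-(n * σ₀ ^ 2) / K ^ 2) :=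
  sum_sq_subgaussian_tail_bound_general W hWmeas hWindep K σ₀ hK hint hsub
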